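/- (Flatness of tensor product connection.) If K and K' are linear connections on vector bundles E and E' over the same base and both are flat (R[K] = 0 and R[K'] = 0), then the tensor product connection K⊗K' is flat. Conversely, if K⊗K' is flat and both bundles have positive rank, then there is a 2-form valued function c such that R[K] = c·id_E and R[K'] = −c·id_{E'}. -/

import Mathlib

open scoped BigOperators Kronecker

/-- Partial derivative in the `nu`-th coordinate direction on `ℝ^m`. -/
noncomputable def pd {m : ℕ} (nu : Fin m) (f : (Fin m → ℝ) → ℝ) (x : Fin m → ℝ) : ℝ :=
  fderiv ℝ f x (Pi.single nu 1)

/-- Entrywise partial derivative of a matrix-valued function. -/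
noncomputable def pdM {m : ℕ} {ι : Type*} (nu : Fin m)
    (A : (Fin m → ℝ) → Matrix ι ι ℝ) (x : Fin m → ℝ) : Matrix ι ι ℝ :=
  Matrix.of fun i j => pd nu (fun y => A y i j) x

/-- Curvature 2-form of a matrix-valued connection form. -/
noncomputable def curvM {m : ℕ} {ι : Type*} [Fintype ι]
    (om : Fin m → (Fin m → ℝ) → Matrix ι ι ℝ)
    (lam mu : Fin m) (x : Fin m → ℝ) : Matrix ι ι ℝ :=
  pdM mu (om lam) x - pdM lam (om mu) x + om mu x * om lam x - om lam x * om mu x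

/-- The connection form of the tensor product connection: `ω ⊗ I' + I ⊗ ω'`. -/
noncomputable def tensorForm {m n n' : ℕ}
    (om : Fin m → (Fin m → ℝ) → Matrix (Fin n) (Fin n) ℝ)
    (om' : Fin m → (Fin m → ℝ) → Matrix (Fin n') (Fin n') ℝ) :
    Fin m → (Fin m → ℝ) → Matrix (Fin n × Fin n') (Fin n × Fin n') ℝ :=
  fun l y => om l y ⊗ₖ (1 : Matrix (Fin n') (Fin n') ℝ)
    + (1 : Matrix (Fin n) (Fin n) ℝ) ⊗ₖ om' l y

lemma pdM_tensor {m n n' : ℕ} {U : Set (Fin m → ℝ)} (hU : IsOpen U)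
    (om : Fin m → (Fin m → ℝ) → Matrix (Fin n) (Fin n) ℝ)
    (om' : Fin m → (Fin m → ℝ) → Matrix (Fin n') (Fin n') ℝ)
    (hom : ∀ l i j, ContDiffOn ℝ (⊤ : ℕ∞) (fun y => om l y i j) U)
    (hom' : ∀ l a b, ContDiffOn ℝ (⊤ : ℕ∞) (fun y => om' l y a b) U)
    (nu l : Fin m) {x : Fin m → ℝ} (hx : x ∈ U) :
    pdM nu (tensorForm om om' l) x
      = pdM nu (om l) x ⊗ₖ (1 : Matrix (Fin n') (Fin n') ℝ)
        + (1 : Matrix (Fin n) (Fin n) ℝ) ⊗ₖ pdM nu (om' l) x := by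
  ext ⟨i, a⟩ ⟨j, b⟩
  have h1 : DifferentiableAt ℝ (fun y => om l y i j) x :=
    (((hom l i j).differentiableOn (by norm_num)).differentiableAt (hU.mem_nhds hx))
  have h2 : DifferentiableAt ℝ (fun y => om' l y a b) x :=
    (((hom' l a b).differentiableOn (by norm_num)).differentiableAt (hU.mem_nhds hx))
  simp only [pdM, pd, tensorForm, Matrix.add_apply, Matrix.kroneckerMap_apply, Matrix.of_apply]
  rw [fderiv_fun_add (h1.mul_const _) (h2.const_mul _), fderiv_mul_const h1, fderiv_const_mul h2]
  simp [mul_comm]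

lemma sub_kron {n n' : ℕ} (A B : Matrix (Fin n) (Fin n) ℝ) (C : Matrix (Fin n') (Fin n') ℝ) :
    (A - B) ⊗ₖ C = A ⊗ₖ C - B ⊗ₖ C := by
  ext ⟨i, a⟩ ⟨j, b⟩
  simp [Matrix.kroneckerMap_apply, sub_mul]

lemma kron_sub {n n' : ℕ} (A : Matrix (Fin n) (Fin n) ℝ) (B C : Matrix (Fin n') (Fin n') ℝ) :
    A ⊗ₖ (B - C) = A ⊗ₖ B - A ⊗ₖ C := by
  ext ⟨i, a⟩ ⟨j, b⟩
  simp [Matrix.kroneckerMap_apply, mul_sub]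

lemma curv_tensor {m n n' : ℕ} {U : Set (Fin m → ℝ)} (hU : IsOpen U)
    (om : Fin m → (Fin m → ℝ) → Matrix (Fin n) (Fin n) ℝ)
    (om' : Fin m → (Fin m → ℝ) → Matrix (Fin n') (Fin n') ℝ)
    (hom : ∀ l i j, ContDiffOn ℝ (⊤ : ℕ∞) (fun y => om l y i j) U)
    (hom' : ∀ l a b, ContDiffOn ℝ (⊤ : ℕ∞) (fun y => om' l y a b) U)
    (lam mu : Fin m) {x : Fin m → ℝ} (hx : x ∈ U) :
    curvM (tensorForm om om') lam mu x
      = curvM om lam mu x ⊗ₖ (1 : Matrix (Fin n') (Fin n') ℝ)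
        + (1 : Matrix (Fin n) (Fin n) ℝ) ⊗ₖ curvM om' lam mu x := by
  unfold curvM
  rw [pdM_tensor hU om om' hom hom' mu lam hx, pdM_tensor hU om om' hom hom' lam mu hx]
  simp only [tensorForm, Matrix.add_mul, Matrix.mul_add, ← Matrix.mul_kronecker_mul,
    sub_kron, kron_sub, Matrix.add_kronecker, Matrix.kronecker_add]
  simp only [one_mul, mul_one]
  abel

lemma kron_zero {n n' : ℕ} (hn : 0 < n) (hn' : 0 < n')
    (A : Matrix (Fin n) (Fin n) ℝ) (B : Matrix (Fin n') (Fin n') ℝ)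
    (H : A ⊗ₖ (1 : Matrix (Fin n') (Fin n') ℝ) + (1 : Matrix (Fin n) (Fin n) ℝ) ⊗ₖ B = 0) :
    A = A ⟨0, hn⟩ ⟨0, hn⟩ • 1 ∧ B = -(A ⟨0, hn⟩ ⟨0, hn⟩) • 1 := by
  have h : ∀ (i j : Fin n) (a b : Fin n'),
      A i j * (if a = b then (1:ℝ) else 0) + (if i = j then (1:ℝ) else 0) * B a b = 0 := by
    intro i j a b
    have := congrFun (congrFun H (i, a)) (j, b)
    simpa [Matrix.add_apply, Matrix.kroneckerMap_apply, Matrix.one_apply] using this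
  set i0 : Fin n := ⟨0, hn⟩
  set a0 : Fin n' := ⟨0, hn'⟩
  have hdiag0 : A i0 i0 + B a0 a0 = 0 := by simpa using h i0 i0 a0 a0
  constructor
  · ext i j
    by_cases hij : i = j
    · subst hij
      have := h i i a0 a0
      simp at this
      have : A i i = A i0 i0 := by linarith [this, hdiag0]
      simpa [Matrix.smul_apply, Matrix.one_apply] using this
    · have := h i j a0 a0
      simp [hij] at this
      simpa [Matrix.smul_apply, Matrix.one_apply, hij] using by linarith
  · ext a b
    by_cases hab : a = b
    · subst hab
      have := h i0 i0 a a
      simp at this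
      have : B a a = -(A i0 i0) := by linarith
      simpa [Matrix.smul_apply, Matrix.one_apply] using this
    · have := h i0 i0 a b
      simp [hab] at this
      simpa [Matrix.smul_apply, Matrix.one_apply, hab] using by linarith

/-- flatness of the tensor product connection: if `K` and `K'` are flat
then `K⊗K'` is flat; conversely, if `K⊗K'` is flat and both ranks are positive then
`R[K] = c·id` and `R[K'] = −c·id` for some 2-form valued function `c`. -/
theorem tensor_connection_flat {m n n' : ℕ} (U : Set (Fin m → ℝ)) (hU : IsOpen U)
    (om : Fin m → (Fin m → ℝ) → Matrix (Fin n) (Fin n) ℝ)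
    (om' : Fin m → (Fin m → ℝ) → Matrix (Fin n') (Fin n') ℝ)
    (hom : ∀ l i j, ContDiffOn ℝ (⊤ : ℕ∞) (fun y => om l y i j) U)
    (hom' : ∀ l a b, ContDiffOn ℝ (⊤ : ℕ∞) (fun y => om' l y a b) U) :
    ((∀ x ∈ U, ∀ lam mu : Fin m, curvM om lam mu x = 0) →
     (∀ x ∈ U, ∀ lam mu : Fin m, curvM om' lam mu x = 0) →
     ∀ x ∈ U, ∀ lam mu : Fin m, curvM (tensorForm om om') lam mu x = 0)
    ∧
    ((∀ x ∈ U, ∀ lam mu : Fin m, curvM (tensorForm om om') lam mu x = 0) →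
     1 ≤ n → 1 ≤ n' →
     ∃ c : Fin m → Fin m → (Fin m → ℝ) → ℝ,
       ∀ x ∈ U, ∀ lam mu : Fin m,
         curvM om lam mu x = c lam mu x • (1 : Matrix (Fin n) (Fin n) ℝ)
         ∧ curvM om' lam mu x = -(c lam mu x) • (1 : Matrix (Fin n') (Fin n') ℝ)) := by
  constructor
  · intro hF hF' x hx lam mu
    rw [curv_tensor hU om om' hom hom' lam mu hx, hF x hx lam mu, hF' x hx lam mu]
    ext ⟨i, a⟩ ⟨j, b⟩
    simp [Matrix.kroneckerMap_apply]
  · intro H hn hn'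
    refine ⟨fun lam mu x => curvM om lam mu x ⟨0, hn⟩ ⟨0, hn⟩, fun x hx lam mu => ?_⟩
    have hz : curvM om lam mu x ⊗ₖ (1 : Matrix (Fin n') (Fin n') ℝ)
        + (1 : Matrix (Fin n) (Fin n) ℝ) ⊗ₖ curvM om' lam mu x = 0 := by
      rw [← curv_tensor hU om om' hom hom' lam mu hx]; exact H x hx lam mu
    exact kron_zero hn hn' _ _ hz
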